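/- For the complete multipartite graph K_{n_1,…,n_k} on n = n_1 + … + n_k vertices, PI_w(K_{n_1,…,n_k}) = Σ_{i<j} n_i n_j (n_i + n_j)(2n − n_i − n_j). -/
import Mathlib


open Finset
open scoped Classical

/-- Number of vertices strictly closer to `u` than to `v`. -/
noncomputable def ncl {V : Type*} [Fintype V] (G : SimpleGraph V) (u v : V) : ℕ :=
  (Finset.univ.filter fun x => G.dist x u < G.dist x v).card

/-- Weighted vertex PI index: each edge `uv` contributes
`(deg u + deg v) * (n_u(e) + n_v(e))`; each edge is counted twice in the double sum. -/
noncomputable def PIw {V : Type*} [Fintype V] (G : SimpleGraph V) : ℝ :=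
  (∑ u, ∑ v, if G.Adj u v then
    (((G.degree u + G.degree v : ℕ) : ℝ) * ((ncl G u v + ncl G v u : ℕ) : ℝ)) else 0) / 2

section aux

variable {k : ℕ} {p : Fin k → ℕ}

lemma part_card (i : Fin k) :
    (univ.filter (fun x : Σ i, Fin (p i) => x.1 = i)).card = p i := by
  classical
  rw [Finset.card_filter, ← Finset.univ_sigma_univ, Finset.sum_sigma]
  simp [apply_ite Finset.card, Finset.card_univ]

lemma deg_eq (u : Σ i, Fin (p i))
    [Fintype ((SimpleGraph.completeMultipartiteGraph (fun i => Fin (p i))).neighborSet u)] :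
    (SimpleGraph.completeMultipartiteGraph (fun i => Fin (p i))).degree u
      = (∑ l, p l) - p u.1 := by
  classical
  rw [← SimpleGraph.card_neighborFinset_eq_degree]
  have h : (SimpleGraph.completeMultipartiteGraph (fun i => Fin (p i))).neighborFinset u
      = univ \ univ.filter (fun x : Σ i, Fin (p i) => x.1 = u.1) := by
    ext x; simp [SimpleGraph.mem_neighborFinset, ne_comm]
  rw [h, card_sdiff_of_subset (filter_subset _ _), part_card]
  congr 1
  rw [Finset.card_univ, Fintype.card_sigma]
  simp

lemma dist_adj {x u : Σ i, Fin (p i)} (h : x.1 ≠ u.1) :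
    (SimpleGraph.completeMultipartiteGraph (fun i => Fin (p i))).dist x u = 1 := by
  rw [SimpleGraph.dist_eq_one_iff_adj]
  simp only [SimpleGraph.comap_adj, SimpleGraph.top_adj]
  exact h

lemma dist_same_part {x u v : Σ i, Fin (p i)} (hxu : x ≠ u) (hpart : x.1 = u.1)
    (hv : u.1 ≠ v.1) :
    (SimpleGraph.completeMultipartiteGraph (fun i => Fin (p i))).dist x u = 2 := by
  have hxv : (SimpleGraph.completeMultipartiteGraph (fun i => Fin (p i))).Adj x v := by
    simp only [SimpleGraph.comap_adj, SimpleGraph.top_adj]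
    rw [hpart]; exact hv
  have hvu : (SimpleGraph.completeMultipartiteGraph (fun i => Fin (p i))).Adj v u := by
    simp only [SimpleGraph.comap_adj, SimpleGraph.top_adj]
    exact fun h => hv h.symm
  have hle : (SimpleGraph.completeMultipartiteGraph (fun i => Fin (p i))).dist x u ≤ 2 := by
    have := SimpleGraph.dist_le (SimpleGraph.Walk.cons hxv (SimpleGraph.Walk.cons hvu
      SimpleGraph.Walk.nil))
    simpa using this
  have hne0 : (SimpleGraph.completeMultipartiteGraph (fun i => Fin (p i))).dist x u ≠ 0 := by
    rw [SimpleGraph.dist_ne_zero_iff_ne_and_reachable]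
    exact ⟨hxu, ⟨(SimpleGraph.Walk.cons hxv (SimpleGraph.Walk.cons hvu SimpleGraph.Walk.nil))⟩⟩
  have hne1 : (SimpleGraph.completeMultipartiteGraph (fun i => Fin (p i))).dist x u ≠ 1 := by
    rw [ne_eq, SimpleGraph.dist_eq_one_iff_adj]
    simp only [SimpleGraph.comap_adj, SimpleGraph.top_adj]
    simp [hpart]
  omega

lemma ncl_adj {u v : Σ i, Fin (p i)} (h : u.1 ≠ v.1) :
    ncl (SimpleGraph.completeMultipartiteGraph (fun i => Fin (p i))) u v = p v.1 := by
  classical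
  have key : (univ.filter fun x : Σ i, Fin (p i) =>
        (SimpleGraph.completeMultipartiteGraph (fun i => Fin (p i))).dist x u <
        (SimpleGraph.completeMultipartiteGraph (fun i => Fin (p i))).dist x v)
      = insert u ((univ.filter (fun x : Σ i, Fin (p i) => x.1 = v.1)).erase v) := by
    ext x
    simp only [mem_filter, mem_univ, true_and, mem_insert, mem_erase]
    constructor
    · intro hlt
      by_cases hxu : x = u
      · exact Or.inl hxu
      · right
        by_cases hxv : x = v
        · subst hxv
          rw [SimpleGraph.dist_self] at hlt; omega
        · refine ⟨hxv, ?_⟩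
          by_contra hx1
          by_cases hxu1 : x.1 = u.1
          · rw [dist_same_part hxu hxu1 h, dist_adj (hxu1 ▸ h)] at hlt; omega
          · rw [dist_adj hxu1, dist_adj hx1] at hlt; omega
    · intro hx
      rcases hx with rfl | ⟨hxv, hx1⟩
      · rw [SimpleGraph.dist_self, dist_adj h]; omega
      · have hxu1 : x.1 ≠ u.1 := by rw [hx1]; exact Ne.symm h
        rw [dist_adj hxu1, dist_same_part hxv hx1 (Ne.symm h)]
        omega
  have hvmem : v ∈ univ.filter (fun x : Σ i, Fin (p i) => x.1 = v.1) := by simp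
  have hunot : u ∉ (univ.filter (fun x : Σ i, Fin (p i) => x.1 = v.1)).erase v := by
    simp only [mem_erase, mem_filter, mem_univ, true_and, not_and]
    intro _ hh
    exact absurd hh h
  rw [ncl, key, card_insert_of_notMem hunot, card_erase_of_mem hvmem, part_card]
  have : 0 < p v.1 := (v.2).pos
  omega

lemma sum_sigma_sigma {M : Type*} [AddCommMonoid M]
    (f : (Σ i, Fin (p i)) → (Σ i, Fin (p i)) → M) :
    ∑ u, ∑ v, f u v = ∑ i, ∑ j, ∑ a : Fin (p i), ∑ b : Fin (p j), f ⟨i, a⟩ ⟨j, b⟩ := by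
  classical
  rw [← Finset.univ_sigma_univ, Finset.sum_sigma]
  refine sum_congr rfl fun i _ => ?_
  exact (sum_congr rfl fun a _ => Finset.sum_sigma _ _ _).trans Finset.sum_comm

end aux

set_option maxHeartbeats 1000000 in
theorem PIw_completeMultipartite (k : ℕ) (p : Fin k → ℕ) :
    PIw (SimpleGraph.completeMultipartiteGraph (fun i => Fin (p i))) =
      ∑ i, ∑ j, (if i < j then
        (p i : ℝ) * (p j : ℝ) * ((p i : ℝ) + (p j : ℝ)) *
          (2 * ((∑ l, p l : ℕ) : ℝ) - (p i : ℝ) - (p j : ℝ)) else 0) := by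
  classical
  set n : ℕ := ∑ l, p l with hn
  have hle : ∀ i, p i ≤ n := fun i =>
    Finset.single_le_sum (fun l _ => Nat.zero_le _) (mem_univ i)
  set c : Fin k → Fin k → ℝ := fun i j =>
    (p i : ℝ) * (p j : ℝ) * ((p i : ℝ) + (p j : ℝ)) * (2 * (n : ℝ) - (p i : ℝ) - (p j : ℝ))
    with hc
  have csymm : ∀ i j, c i j = c j i := by
    intro i j; simp only [hc]; ring
  have step1 : PIw (SimpleGraph.completeMultipartiteGraph (fun i => Fin (p i))) =
      (∑ i, ∑ j, if i ≠ j then c i j else 0) / 2 := by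
    rw [PIw, sum_sigma_sigma]
    simp only [deg_eq]
    congr 1
    refine Finset.sum_congr rfl fun i _ => Finset.sum_congr rfl fun j _ => ?_
    by_cases hij : i = j
    · subst hij; simp
    · have hval : ∀ a : Fin (p i), ∀ b : Fin (p j),
          (if (SimpleGraph.completeMultipartiteGraph (fun i => Fin (p i))).Adj ⟨i, a⟩ ⟨j, b⟩ then
            ((((n - p (⟨i, a⟩ : Σ i, Fin (p i)).1) +
                (n - p (⟨j, b⟩ : Σ i, Fin (p i)).1) : ℕ) : ℝ) *
              ((ncl (SimpleGraph.completeMultipartiteGraph (fun i => Fin (p i))) ⟨i, a⟩ ⟨j, b⟩ +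
                ncl (SimpleGraph.completeMultipartiteGraph (fun i => Fin (p i))) ⟨j, b⟩ ⟨i, a⟩
                : ℕ) : ℝ)) else 0)
          = (((n - p i) + (n - p j) : ℕ) : ℝ) * (((p j) + (p i) : ℕ) : ℝ) := by
        intro a b
        have hadj : (SimpleGraph.completeMultipartiteGraph (fun i => Fin (p i))).Adj
            ⟨i, a⟩ ⟨j, b⟩ := by
          simp only [SimpleGraph.comap_adj, SimpleGraph.top_adj]; exact hij
        rw [if_pos hadj,
          ncl_adj (show (⟨i, a⟩ : Σ i, Fin (p i)).1 ≠ (⟨j, b⟩ : Σ i, Fin (p i)).1 from hij),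
          ncl_adj (show (⟨j, b⟩ : Σ i, Fin (p i)).1 ≠ (⟨i, a⟩ : Σ i, Fin (p i)).1
            from fun h => hij h.symm)]
      rw [if_pos hij]
      refine Eq.trans (Finset.sum_congr rfl fun a _ => Finset.sum_congr rfl fun b _ => hval a b) ?_
      simp only [Finset.sum_const, Finset.card_univ, Fintype.card_fin, nsmul_eq_mul, hc]
      push_cast [Nat.cast_sub (hle i), Nat.cast_sub (hle j)]
      ring
  rw [step1]
  have step2 : (∑ i, ∑ j, if i ≠ j then c i j else 0)
      = 2 * ∑ i, ∑ j, if i < j then c i j else 0 := by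
    have split : ∀ i j : Fin k, (if i ≠ j then c i j else 0)
        = (if i < j then c i j else 0) + (if j < i then c i j else 0) := by
      intro i j
      rcases lt_trichotomy i j with h | h | h
      · rw [if_pos h.ne, if_pos h, if_neg (asymm h), add_zero]
      · subst h; simp
      · rw [if_pos h.ne', if_neg (asymm h), if_pos h, zero_add]
    calc (∑ i, ∑ j, if i ≠ j then c i j else 0)
        = (∑ i, ∑ j, if i < j then c i j else 0)
          + ∑ i, ∑ j, if j < i then c i j else 0 := by
          rw [← Finset.sum_add_distrib]
          refine Finset.sum_congr rfl fun i _ => ?_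
          rw [← Finset.sum_add_distrib]
          exact Finset.sum_congr rfl fun j _ => split i j
      _ = 2 * ∑ i, ∑ j, if i < j then c i j else 0 := by
          rw [two_mul]
          congr 1
          rw [Finset.sum_comm]
          exact Finset.sum_congr rfl fun i _ => Finset.sum_congr rfl fun j _ => by
            rw [csymm]
  rw [step2]
  ring
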